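/- Fix V > 0 and for B > 0 define λ*₁(B) := (4V/π)·[1 − 4I₂(√B)/(√B·I₁(√B))]^{−1}. Then 0 < 4I₂(√B)/(√B·I₁(√B)) < 1 for every B > 0 (so λ*₁(B) is well defined and positive), the map B ↦ λ*₁(B) is strictly decreasing on (0,∞), and λ*₁(B) → 4V/π as B → ∞. -/

import Mathlib

/-- Modified Bessel function of the first kind of (natural) order `n`,
`I_n(x) = sum_k (x/2)^(2k+n) / (k! * Gamma (k+n+1))`. -/
noncomputable def besselI (n : ℕ) (x : ℝ) : ℝ :=
  ∑' k : ℕ, (x / 2) ^ (2 * k + n) / ((k.factorial : ℝ) * Real.Gamma (k + n + 1))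

/-- The squared maximal sloshing frequency lambda*1(B) for m = 1 with surface tension. -/
noncomputable def lamStarR1 (V B : ℝ) : ℝ :=
  (4 * V / Real.pi) * (1 - 4 * besselI 2 (Real.sqrt B) /
    (Real.sqrt B * besselI 1 (Real.sqrt B)))⁻¹

/-!
Put `t = B / 4` and `S_n(t) = ∑ₖ tᵏ / (k! (k + n)!)`, so that `I_n(x) = (x/2)ⁿ S_n((x/2)²)` and
the quotient in `lamStarR1` is `2 S₂(t) / S₁(t)`. The coefficients of `S₂` are those of `S₁`
multiplied by `1 / (k + 2)`. This factor is at most `1/2`, and `< 1/2` for `k ≥ 1`, so the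
quotient lies in `(0, 1)`; it decreases in `k`, so by Chebyshev's sum inequality `S₂ / S₁` is
strictly decreasing; it tends to `0`, so `S₂(t) / S₁(t) → 0` as `t → ∞`.
-/

open Filter Topology Asymptotics
open scoped Nat

section PowerSeriesRatio

variable {a b : ℕ → ℝ}

theorem pow_mul_pow_le_pow_mul_pow {s t : ℝ} (hs : 0 ≤ s) (hst : s ≤ t) {j k : ℕ} (hjk : j ≤ k) :
    t ^ j * s ^ k ≤ s ^ j * t ^ k := by
  obtain ⟨m, rfl⟩ := Nat.exists_eq_add_of_le hjk
  have : s ^ m ≤ t ^ m := pow_le_pow_left₀ hs hst m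
  have := hs.trans hst
  calc t ^ j * s ^ (j + m) = s ^ j * t ^ j * s ^ m := by ring
    _ ≤ s ^ j * t ^ j * t ^ m := by gcongr
    _ = s ^ j * t ^ (j + m) := by ring

/-- Chebyshev's sum inequality for two power series whose coefficient ratio `a k / b k` decreases:
symmetrising the double series of `A(s) B(t) - A(t) B(s)` makes every term nonnegative. -/
theorem tsum_mul_pow_mul_tsum_mul_pow_lt (ha : ∀ k, 0 ≤ a k) (hb : ∀ k, 0 ≤ b k)
    (hsa : ∀ t, Summable fun k => a k * t ^ k) (hsb : ∀ t, Summable fun k => b k * t ^ k)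
    (hab : ∀ j k, j ≤ k → a k * b j ≤ a j * b k) (hab₀₁ : a 1 * b 0 < a 0 * b 1)
    {s t : ℝ} (hs : 0 ≤ s) (hst : s < t) :
    (∑' k, a k * t ^ k) * (∑' k, b k * s ^ k) < (∑' k, a k * s ^ k) * (∑' k, b k * t ^ k) := by
  have ht : 0 ≤ t := hs.trans hst.le
  have hprod : ∀ u v : ℝ, 0 ≤ u → 0 ≤ v →
      HasSum (fun p : ℕ × ℕ => a p.1 * u ^ p.1 * (b p.2 * v ^ p.2))
        ((∑' k, a k * u ^ k) * (∑' k, b k * v ^ k)) := fun u v hu hv =>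
    HasSum.mul (f := fun k => a k * u ^ k) (g := fun k => b k * v ^ k) (hsa u).hasSum
      (hsb v).hasSum <| Summable.mul_of_nonneg (hsa u) (hsb v)
        (fun k => mul_nonneg (ha k) (pow_nonneg hu k))
        (fun k => mul_nonneg (hb k) (pow_nonneg hv k))
  let term : ℕ × ℕ → ℝ := fun p =>
    a p.1 * s ^ p.1 * (b p.2 * t ^ p.2) - a p.1 * t ^ p.1 * (b p.2 * s ^ p.2)
  let D :=
    (∑' k, a k * s ^ k) * (∑' k, b k * t ^ k) - (∑' k, a k * t ^ k) * (∑' k, b k * s ^ k)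
  have hterm : HasSum term D := (hprod s t hs ht).sub (hprod t s ht hs)
  have hswap : HasSum (fun p : ℕ × ℕ => term p.swap) D :=
    ((Equiv.prodComm ℕ ℕ).hasSum_iff (f := term)).mpr hterm
  have hsymm : HasSum (fun p => term p + term p.swap) (D + D) := hterm.add hswap
  have hsymm_eq : ∀ p : ℕ × ℕ, term p + term p.swap
      = (a p.1 * b p.2 - a p.2 * b p.1) * (s ^ p.1 * t ^ p.2 - t ^ p.1 * s ^ p.2) := by
    intro p; simp only [term, Prod.fst_swap, Prod.snd_swap]; ring
  have hsymm_nonneg : ∀ p : ℕ × ℕ, 0 ≤ term p + term p.swap := by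
    rintro ⟨i, j⟩
    rw [hsymm_eq]
    rcases le_total i j with h | h
    · exact mul_nonneg (sub_nonneg.mpr (hab i j h))
        (sub_nonneg.mpr (pow_mul_pow_le_pow_mul_pow hs hst.le h))
    · have := pow_mul_pow_le_pow_mul_pow hs hst.le h
      exact mul_nonneg_of_nonpos_of_nonpos (sub_nonpos.mpr (hab j i h)) (by linarith)
  have h₀₁ : 0 < term (0, 1) + term (0, 1).swap := by
    rw [hsymm_eq]
    simpa using mul_pos (sub_pos.mpr hab₀₁) (sub_pos.mpr hst)
  have := le_hasSum hsymm (0, 1) fun p _ => hsymm_nonneg p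
  linarith

theorem tsum_mul_pow_le_sum_range_add (hb : ∀ k, 0 ≤ b k)
    (hsa : ∀ t, Summable fun k => a k * t ^ k) (hsb : ∀ t, Summable fun k => b k * t ^ k)
    {δ : ℝ} (hδ : 0 ≤ δ) {N : ℕ} (hN : ∀ k ≥ N, a k ≤ δ * b k) {t : ℝ} (ht : 0 ≤ t) :
    ∑' k, a k * t ^ k ≤ ∑ k ∈ Finset.range N, a k * t ^ k + δ * ∑' k, b k * t ^ k := by
  have hb_tail : ∑' k, b (k + N) * t ^ (k + N) ≤ ∑' k, b k * t ^ k := by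
    rw [← (hsb t).sum_add_tsum_nat_add N]
    exact le_add_of_nonneg_left <| Finset.sum_nonneg fun k _ => mul_nonneg (hb k) (pow_nonneg ht k)
  rw [← (hsa t).sum_add_tsum_nat_add N]
  gcongr
  calc ∑' k, a (k + N) * t ^ (k + N)
      ≤ ∑' k, δ * (b (k + N) * t ^ (k + N)) :=
        Summable.tsum_le_tsum
          (fun k => by rw [← mul_assoc]; gcongr; exact hN _ (Nat.le_add_left N k))
          ((summable_nat_add_iff N).2 (hsa t)) (((summable_nat_add_iff N).2 (hsb t)).mul_left δ)
    _ = δ * ∑' k, b (k + N) * t ^ (k + N) := tsum_mul_left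
    _ ≤ δ * ∑' k, b k * t ^ k := by gcongr

theorem sum_range_mul_pow_mul_le (ha : ∀ k, 0 ≤ a k) {t : ℝ} (ht : 1 ≤ t) (N : ℕ) :
    (∑ k ∈ Finset.range N, a k * t ^ k) * t ≤ (∑ k ∈ Finset.range N, a k) * t ^ N := by
  rw [Finset.sum_mul, Finset.sum_mul]
  refine Finset.sum_le_sum fun k hk => ?_
  rw [mul_assoc, ← pow_succ]
  exact mul_le_mul_of_nonneg_left (pow_le_pow_right₀ ht (Finset.mem_range.1 hk)) (ha k)

theorem tendsto_tsum_mul_pow_div_tsum_mul_pow_atTop (ha : ∀ k, 0 ≤ a k) (hb : ∀ k, 0 < b k)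
    (hsa : ∀ t, Summable fun k => a k * t ^ k) (hsb : ∀ t, Summable fun k => b k * t ^ k)
    (hab : a =o[atTop] b) :
    Tendsto (fun t => (∑' k, a k * t ^ k) / ∑' k, b k * t ^ k) atTop (𝓝 0) := by
  refine tendsto_order.2 ⟨fun ε hε => ?_, fun ε hε => ?_⟩
  · filter_upwards [eventually_ge_atTop 0] with t ht
    exact hε.trans_le <| div_nonneg (tsum_nonneg fun k => mul_nonneg (ha k) (pow_nonneg ht k))
      (tsum_nonneg fun k => mul_nonneg (hb k).le (pow_nonneg ht k))
  obtain ⟨N, hN⟩ := eventually_atTop.1 (hab.bound (half_pos hε))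
  set C := ∑ k ∈ Finset.range N, a k
  have hbN := hb N
  have hC : Tendsto (fun t => C / (b N * t)) atTop (𝓝 0) :=
    tendsto_const_nhds.div_atTop (tendsto_id.const_mul_atTop hbN)
  filter_upwards [eventually_ge_atTop 1, hC.eventually (gt_mem_nhds (half_pos hε))]
    with t ht hCt
  have ht0 : 0 < t := one_pos.trans_le ht
  set B := ∑' k, b k * t ^ k
  have hB : b N * t ^ N ≤ B :=
    (hsb t).le_tsum N fun k _ => mul_nonneg (hb k).le (pow_nonneg ht0.le k)
  have hBpos : 0 < B := hB.trans_lt' (by positivity)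
  have hhead : ∑ k ∈ Finset.range N, a k * t ^ k ≤ C / (b N * t) * B := by
    rw [div_mul_eq_mul_div, le_div_iff₀ (by positivity)]
    calc (∑ k ∈ Finset.range N, a k * t ^ k) * (b N * t)
        = (∑ k ∈ Finset.range N, a k * t ^ k) * t * b N := by ring
      _ ≤ C * t ^ N * b N := by gcongr ?_ * _; exact sum_range_mul_pow_mul_le ha ht N
      _ = C * (b N * t ^ N) := by ring
      _ ≤ C * B := by gcongr; exact Finset.sum_nonneg fun k _ => ha k
  have htail := tsum_mul_pow_le_sum_range_add (fun k => (hb k).le) hsa hsb (half_pos hε).le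
    (fun k hk => by simpa [abs_of_nonneg (ha k), abs_of_pos (hb k)] using hN k hk) ht0.le
  rw [div_lt_iff₀ hBpos]
  linarith [mul_lt_mul_of_pos_right hCt hBpos]

end PowerSeriesRatio

section BesselSeries

noncomputable def besselCoeff (n k : ℕ) : ℝ := ((k ! : ℝ) * (k + n)!)⁻¹

noncomputable def besselSeries (n : ℕ) (t : ℝ) : ℝ := ∑' k, besselCoeff n k * t ^ k

variable (n : ℕ)

theorem besselCoeff_pos (k : ℕ) : 0 < besselCoeff n k := by
  unfold besselCoeff; positivity

theorem besselCoeff_succ (k : ℕ) : besselCoeff (n + 1) k = besselCoeff n k / (k + n + 1) := by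
  simp only [besselCoeff, ← add_assoc, Nat.factorial_succ]
  push_cast
  field_simp

theorem summable_besselCoeff_mul_pow (t : ℝ) : Summable fun k => besselCoeff n k * t ^ k := by
  refine .of_norm_bounded (Real.summable_pow_div_factorial |t|) fun k => ?_
  rw [norm_mul, Real.norm_of_nonneg (besselCoeff_pos n k).le, norm_pow, Real.norm_eq_abs,
    div_eq_inv_mul, besselCoeff, mul_inv]
  gcongr
  exact mul_le_of_le_one_right (by positivity)
    (inv_le_one_of_one_le₀ (mod_cast (k + n).factorial_pos))

theorem besselI_eq_mul_besselSeries (x : ℝ) :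
    besselI n x = (x / 2) ^ n * besselSeries n ((x / 2) ^ 2) := by
  rw [besselI, besselSeries, ← tsum_mul_left]
  congr 1 with k
  rw [show (k : ℝ) + n + 1 = ((k + n : ℕ) : ℝ) + 1 by push_cast; ring,
    Real.Gamma_nat_eq_factorial, besselCoeff, ← pow_mul, pow_add]
  field_simp

variable {n}

theorem besselSeries_pos {t : ℝ} (ht : 0 ≤ t) : 0 < besselSeries n t :=
  (summable_besselCoeff_mul_pow n t).tsum_pos
    (fun k => mul_nonneg (besselCoeff_pos n k).le (pow_nonneg ht k)) 0
    (by simpa using besselCoeff_pos n 0)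

theorem succ_mul_besselSeries_succ_lt {t : ℝ} (ht : 0 < t) :
    (n + 1) * besselSeries (n + 1) t < besselSeries n t := by
  have hterm : ∀ k : ℕ, (n + 1) * (besselCoeff (n + 1) k * t ^ k)
      = (n + 1) / (k + n + 1) * (besselCoeff n k * t ^ k) := fun k => by
    rw [besselCoeff_succ]; ring
  have hpos : ∀ k, 0 < besselCoeff n k * t ^ k := fun k => by
    have := besselCoeff_pos n k; positivity
  rw [besselSeries, ← tsum_mul_left]
  refine Summable.tsum_lt_tsum (i := 1) (fun k => ?_) ?_
    ((summable_besselCoeff_mul_pow _ t).mul_left _) (summable_besselCoeff_mul_pow n t)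
  · rw [hterm]
    exact mul_le_of_le_one_left (hpos k).le <| div_le_one_of_le₀ (by linarith) (by positivity)
  · rw [hterm]
    exact mul_lt_of_lt_one_left (hpos 1) <| (div_lt_one (by positivity)).2 (by push_cast; linarith)

theorem besselCoeff_succ_mul_lt {j k : ℕ} (hjk : j < k) :
    besselCoeff (n + 1) k * besselCoeff n j < besselCoeff (n + 1) j * besselCoeff n k := by
  have := besselCoeff_pos n j
  have := besselCoeff_pos n k
  rw [besselCoeff_succ, besselCoeff_succ, div_mul_eq_mul_div, div_mul_eq_mul_div,
    mul_comm (besselCoeff n k)]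
  gcongr

theorem besselSeries_succ_div_strictAntiOn :
    StrictAntiOn (fun t => besselSeries (n + 1) t / besselSeries n t) (Set.Ici 0) := by
  intro s hs t ht hst
  rw [div_lt_div_iff₀ (besselSeries_pos ht) (besselSeries_pos hs)]
  refine tsum_mul_pow_mul_tsum_mul_pow_lt (fun k => (besselCoeff_pos _ k).le)
    (fun k => (besselCoeff_pos n k).le) (summable_besselCoeff_mul_pow _)
    (summable_besselCoeff_mul_pow n) (fun j k hjk => ?_) (besselCoeff_succ_mul_lt one_pos) hs hst
  rcases hjk.eq_or_lt with rfl | hjk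
  · rfl
  · exact (besselCoeff_succ_mul_lt hjk).le

theorem tendsto_besselSeries_succ_div_atTop :
    Tendsto (fun t => besselSeries (n + 1) t / besselSeries n t) atTop (𝓝 0) := by
  refine tendsto_tsum_mul_pow_div_tsum_mul_pow_atTop (fun k => (besselCoeff_pos _ k).le)
    (besselCoeff_pos n) (summable_besselCoeff_mul_pow _) (summable_besselCoeff_mul_pow n) ?_
  rw [isLittleO_iff_tendsto' (.of_forall fun k h => absurd h (besselCoeff_pos n k).ne')]
  have : Tendsto (fun k : ℕ => ((k : ℝ) + n + 1)⁻¹) atTop (𝓝 0) :=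
    tendsto_inv_atTop_zero.comp <| tendsto_atTop_add_const_right _ _ <|
      tendsto_atTop_add_const_right _ _ tendsto_natCast_atTop_atTop
  refine this.congr fun k => ?_
  rw [besselCoeff_succ, div_div_cancel_left' (besselCoeff_pos n k).ne']

end BesselSeries

theorem besselI_two_div_besselI_one_eq {B : ℝ} (hB : 0 < B) :
    4 * besselI 2 (Real.sqrt B) / (Real.sqrt B * besselI 1 (Real.sqrt B))
      = 2 * (besselSeries 2 (B / 4) / besselSeries 1 (B / 4)) := by
  have hsq : (Real.sqrt B / 2) ^ 2 = B / 4 := by rw [div_pow, Real.sq_sqrt hB.le]; norm_num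
  have := besselSeries_pos (n := 1) (by positivity : 0 ≤ B / 4)
  rw [besselI_eq_mul_besselSeries, besselI_eq_mul_besselSeries, hsq]
  field_simp
  rw [Real.sq_sqrt hB.le, mul_comm]

theorem two_mul_besselSeries_two_div_lt_one {t : ℝ} (ht : 0 < t) :
    2 * (besselSeries 2 t / besselSeries 1 t) < 1 := by
  rw [mul_div_assoc', div_lt_one (besselSeries_pos ht.le)]
  simpa [one_add_one_eq_two] using succ_mul_besselSeries_succ_lt (n := 1) ht

theorem lamStarR1_monotone_limit (V : ℝ) (hV : 0 < V) :
    (∀ B : ℝ, 0 < B →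
      0 < 4 * besselI 2 (Real.sqrt B) / (Real.sqrt B * besselI 1 (Real.sqrt B)) ∧
      4 * besselI 2 (Real.sqrt B) / (Real.sqrt B * besselI 1 (Real.sqrt B)) < 1) ∧
    StrictAntiOn (lamStarR1 V) (Set.Ioi 0) ∧
    Filter.Tendsto (lamStarR1 V) Filter.atTop (nhds (4 * V / Real.pi)) := by
  set ρ : ℝ → ℝ := fun t => 2 * (besselSeries 2 t / besselSeries 1 t)
  have hlam : ∀ B, 0 < B → lamStarR1 V B = 4 * V / Real.pi * (1 - ρ (B / 4))⁻¹ := fun B hB => by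
    rw [lamStarR1, besselI_two_div_besselI_one_eq hB]
  refine ⟨fun B hB => ?_, fun a ha b hb hab => ?_, ?_⟩
  · rw [besselI_two_div_besselI_one_eq hB]
    have := besselSeries_pos (n := 1) (by positivity : 0 ≤ B / 4)
    have := besselSeries_pos (n := 2) (by positivity : 0 ≤ B / 4)
    exact ⟨by positivity, two_mul_besselSeries_two_div_lt_one (by positivity)⟩
  · have ha' : (0 : ℝ) < a := ha
    have hρ : ρ (b / 4) < ρ (a / 4) := mul_lt_mul_of_pos_left
      (besselSeries_succ_div_strictAntiOn (n := 1) (Set.mem_Ici.2 (by linarith))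
        (Set.mem_Ici.2 (by linarith)) (by linarith)) two_pos
    have hρa : ρ (a / 4) < 1 := two_mul_besselSeries_two_div_lt_one (by positivity)
    rw [hlam a ha, hlam b hb]
    gcongr
  · have hρ : Tendsto (fun B => ρ (B / 4)) atTop (𝓝 0) := by
      have := (tendsto_besselSeries_succ_div_atTop (n := 1)).const_mul 2 |>.comp
        (tendsto_id.atTop_div_const (by norm_num : (0 : ℝ) < 4))
      rwa [mul_zero] at this
    have := ((tendsto_const_nhds.sub hρ).inv₀ (by norm_num : (1 : ℝ) - 0 ≠ 0)).const_mul
      (4 * V / Real.pi)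
    rw [sub_zero, inv_one, mul_one] at this
    exact this.congr' <| (eventually_gt_atTop 0).mono fun B hB => (hlam B hB).symm
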